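/- arXiv:1404.4660 — 4 statements merged into one kernel-verified Lean document; each statement's English description precedes it below -/
import Mathlib

section
/- With 0 < ε < 1, 0 < c < 1, and 2ε² < 1 + c, the inequality −√(c − (1+c)(R̄² − c)/(1 − c)) < −ε√(1 − 2(R̄² − c)/(1 − c)) holds if and only if 2c − (1+c)R̄² > ε²(1 + c − 2R̄²); consequently, period-one points exist in the bulk of the shell of radius R̄ only if c < R̄² < (ε²(1 + c) − 2c)/(2ε² − (1 + c)). -/
/-!
Both sides are nonpositive, so squaring turns the comparison of the two depths into
`ε² B < A` with `A = c - (1 + c) t`, `B = 1 - 2 t`, `t = (R̄² - c)/(1 - c)`. Multiplying by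
`1 - c > 0` clears `t`: `(1 - c) A = 2c - (1 + c) R̄²` and `(1 - c) B = 1 + c - 2R̄²`. The
resulting linear inequality in `R̄²` has leading coefficient `2ε² - (1 + c) < 0`, which bounds
`R̄²` from above.
-/

namespace Real

theorem neg_sqrt_lt_neg_mul_sqrt_iff {ε a b : ℝ} (hε : 0 ≤ ε) (hb : 0 ≤ b) :
    -√a < -(ε * √b) ↔ ε ^ 2 * b < a := by
  rw [neg_lt_neg_iff, lt_sqrt (mul_nonneg hε (sqrt_nonneg b)), mul_pow, sq_sqrt hb]

end Real

section BulkShell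

variable {ε c x : ℝ}

theorem sq_mul_one_sub_two_div_lt_iff (hc : c < 1) :
    ε ^ 2 * (1 - 2 * (x - c) / (1 - c)) < c - (1 + c) * (x - c) / (1 - c) ↔
      ε ^ 2 * (1 + c - 2 * x) < 2 * c - (1 + c) * x := by
  have hpos : 0 < 1 - c := sub_pos.mpr hc
  have hB : (1 - c) * (ε ^ 2 * (1 - 2 * (x - c) / (1 - c))) = ε ^ 2 * (1 + c - 2 * x) := by
    field_simp; ring
  have hA : (1 - c) * (c - (1 + c) * (x - c) / (1 - c)) = 2 * c - (1 + c) * x := by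
    field_simp; ring
  rw [← mul_lt_mul_iff_of_pos_left hpos, hB, hA]

theorem lt_div_of_sq_mul_lt (hden : 2 * ε ^ 2 < 1 + c)
    (h : ε ^ 2 * (1 + c - 2 * x) < 2 * c - (1 + c) * x) :
    x < (ε ^ 2 * (1 + c) - 2 * c) / (2 * ε ^ 2 - (1 + c)) := by
  rw [lt_div_iff_of_neg (by linarith)]
  linarith

end BulkShell

theorem period_one_existence_condition_general (ε c R : ℝ)
    (hε0 : 0 < ε) (hc1 : c < 1)
    (hden : 2 * ε ^ 2 < 1 + c)
    (hB : 0 ≤ 1 - 2 * (R ^ 2 - c) / (1 - c)) :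
    ((-Real.sqrt (c - (1 + c) * (R ^ 2 - c) / (1 - c)) <
        -(ε * Real.sqrt (1 - 2 * (R ^ 2 - c) / (1 - c)))) ↔
      2 * c - (1 + c) * R ^ 2 > ε ^ 2 * (1 + c - 2 * R ^ 2)) ∧
    ((c < R ^ 2 ∧
        -Real.sqrt (c - (1 + c) * (R ^ 2 - c) / (1 - c)) <
          -(ε * Real.sqrt (1 - 2 * (R ^ 2 - c) / (1 - c)))) →
      c < R ^ 2 ∧ R ^ 2 < (ε ^ 2 * (1 + c) - 2 * c) / (2 * ε ^ 2 - (1 + c))) := by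
  have key := (Real.neg_sqrt_lt_neg_mul_sqrt_iff hε0.le hB).trans (sq_mul_one_sub_two_div_lt_iff hc1)
  exact ⟨key, fun ⟨hcR, hlt⟩ => ⟨hcR, lt_div_of_sq_mul_lt hden (key.mp hlt)⟩⟩

/-- With 0 < ε < 1, 0 < c < 1 and 2ε² < 1 + c, the inequality
−√(c − (1+c)(R̄²−c)/(1−c)) < −ε√(1 − 2(R̄²−c)/(1−c)) holds iff
2c − (1+c)R̄² > ε²(1 + c − 2R̄²); consequently period-one points exist on the
bulk shell of radius R̄ only if c < R̄² < (ε²(1+c) − 2c)/(2ε² − (1+c)). -/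
theorem period_one_existence_condition (ε c R : ℝ)
    (hε0 : 0 < ε) (hε1 : ε < 1) (hc0 : 0 < c) (hc1 : c < 1)
    (hden : 2 * ε ^ 2 < 1 + c)
    (hA : 0 ≤ c - (1 + c) * (R ^ 2 - c) / (1 - c))
    (hB : 0 ≤ 1 - 2 * (R ^ 2 - c) / (1 - c)) :
    ((-Real.sqrt (c - (1 + c) * (R ^ 2 - c) / (1 - c)) <
        -(ε * Real.sqrt (1 - 2 * (R ^ 2 - c) / (1 - c)))) ↔
      2 * c - (1 + c) * R ^ 2 > ε ^ 2 * (1 + c - 2 * R ^ 2)) ∧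
    ((c < R ^ 2 ∧
        -Real.sqrt (c - (1 + c) * (R ^ 2 - c) / (1 - c)) <
          -(ε * Real.sqrt (1 - 2 * (R ^ 2 - c) / (1 - c)))) →
      c < R ^ 2 ∧ R ^ 2 < (ε ^ 2 * (1 + c) - 2 * c) / (2 * ε ^ 2 - (1 + c))) :=
  period_one_existence_condition_general ε c R hε0 hc1 hden hB
end

section
/- For a flowing-layer trajectory starting on the interface at (x₀, y₀ = −δ(x₀)) with δ(x) = ε√(L² − x²), 0 < ε < 1, 0 < L, |x₀| < L, the solution of dx/dt = (1/ε²)(δ(x) + y), with y determined by constancy of ψ_fl = (1/ε²)[δ(x)y + y²/2], is x(t) = √(L² + κ) sin(t/ε + arcsin(x₀/√(L² + κ))), where κ = (2/ε²)[δ(x₀)y₀ + y₀²/2] = x₀² − L². -/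
/-!
Starting on the interface `y₀ = −δ(x₀)` gives `κ = −δ(x₀)²/ε² = x₀² − L²`, so the amplitude
`√(L² + κ)` is `|x₀| = −x₀` and the initial phase is `arcsin (−1) = −π/2`; the trajectory is
`x₀ cos (t/ε)`. Any `R sin (t/ε + φ)` with `R ≥ 0` satisfies `ẋ = (1/ε)√(R² − x²)` as long as
`cos (t/ε + φ) ≥ 0`, which here is `sin (t/ε) ≥ 0`, i.e. `t ∈ [0, επ]`.
-/

open Real

theorem two_div_sq_mul_interface_stream {ε a : ℝ} (hε : ε ≠ 0) (ha : 0 ≤ a) :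
    (2 / ε ^ 2) * (ε * √a * -(ε * √a) + (-(ε * √a)) ^ 2 / 2) = -a := by
  field_simp
  rw [sq_sqrt ha]
  ring

theorem hasDerivAt_mul_sin_div_add {R ε φ t : ℝ} (hR : 0 ≤ R) (hcos : 0 ≤ cos (t / ε + φ)) :
    HasDerivAt (fun s => R * sin (s / ε + φ))
      ((1 / ε) * √(R ^ 2 - (R * sin (t / ε + φ)) ^ 2)) t := by
  have hroot : √(R ^ 2 - (R * sin (t / ε + φ)) ^ 2) = R * cos (t / ε + φ) := by
    rw [← sqrt_sq (mul_nonneg hR hcos)]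
    congr 1
    linear_combination -R ^ 2 * sin_sq_add_cos_sq (t / ε + φ)
  have hphase : HasDerivAt (fun s => s / ε + φ) (1 / ε) t := by
    simpa using ((hasDerivAt_id t).div_const ε).add_const φ
  refine (((hasDerivAt_sin _).comp t hphase).const_mul R).congr_deriv ?_
  rw [hroot]
  ring

theorem flowing_layer_trajectory_solution_general (ε L x₀ y₀ : ℝ)
    (hε0 : 0 < ε)
    (hx₀ : |x₀| < L) (hx₀neg : x₀ < 0)
    (hy₀ : y₀ = -(ε * Real.sqrt (L ^ 2 - x₀ ^ 2))) :
    let δ : ℝ → ℝ := fun x => ε * Real.sqrt (L ^ 2 - x ^ 2)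
    let κ := (2 / ε ^ 2) * (δ x₀ * y₀ + y₀ ^ 2 / 2)
    let x : ℝ → ℝ := fun t =>
      Real.sqrt (L ^ 2 + κ) *
        Real.sin (t / ε + Real.arcsin (x₀ / Real.sqrt (L ^ 2 + κ)))
    κ = x₀ ^ 2 - L ^ 2 ∧ x 0 = x₀ ∧
      ∀ t ∈ Set.Icc (0 : ℝ) (ε * Real.pi),
        HasDerivAt x ((1 / ε) * Real.sqrt (L ^ 2 + κ - x t ^ 2)) t := by
  intro δ κ x
  have hκ : κ = x₀ ^ 2 - L ^ 2 := by
    have hx₀L : 0 ≤ L ^ 2 - x₀ ^ 2 := by nlinarith [sq_abs x₀, abs_nonneg x₀]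
    simpa [κ, δ, hy₀] using two_div_sq_mul_interface_stream hε0.ne' hx₀L
  have hLκ : L ^ 2 + κ = x₀ ^ 2 := by rw [hκ]; ring
  have hR : √(L ^ 2 + κ) = -x₀ := by rw [hLκ, sqrt_sq_eq_abs, abs_of_neg hx₀neg]
  have hφ : arcsin (x₀ / √(L ^ 2 + κ)) = -(π / 2) := by
    rw [hR, div_neg, div_self hx₀neg.ne, arcsin_neg, arcsin_one]
  refine ⟨hκ, ?_, fun t ht => ?_⟩
  · show √(L ^ 2 + κ) * sin (0 / ε + arcsin (x₀ / √(L ^ 2 + κ))) = x₀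
    rw [hφ, hR]
    simp
  · have hcos : 0 ≤ cos (t / ε + arcsin (x₀ / √(L ^ 2 + κ))) := by
      rw [hφ, ← sub_eq_add_neg, cos_sub_pi_div_two]
      exact sin_nonneg_of_nonneg_of_le_pi (div_nonneg ht.1 hε0.le)
        ((div_le_iff₀ hε0).2 (by linarith [ht.2]))
    rw [← sq_sqrt (hLκ ▸ sq_nonneg x₀ : 0 ≤ L ^ 2 + κ)]
    exact hasDerivAt_mul_sin_div_add (sqrt_nonneg _) hcos

/-- For a flowing-layer trajectory starting on the interface at
(x₀, y₀ = −δ(x₀)), δ(x) = ε√(L²−x²), the solution of the flowing-layer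
equation dx/dt = (1/ε)√(L²+κ−x²) is
x(t) = √(L²+κ) sin(t/ε + arcsin(x₀/√(L²+κ))) with
κ = (2/ε²)[δ(x₀)y₀ + y₀²/2] = x₀² − L². -/
theorem flowing_layer_trajectory_solution (ε L x₀ y₀ : ℝ)
    (hε0 : 0 < ε) (hε1 : ε < 1) (hL : 0 < L)
    (hx₀ : |x₀| < L) (hx₀neg : x₀ < 0)
    (hy₀ : y₀ = -(ε * Real.sqrt (L ^ 2 - x₀ ^ 2))) :
    let δ : ℝ → ℝ := fun x => ε * Real.sqrt (L ^ 2 - x ^ 2)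
    let κ := (2 / ε ^ 2) * (δ x₀ * y₀ + y₀ ^ 2 / 2)
    let x : ℝ → ℝ := fun t =>
      Real.sqrt (L ^ 2 + κ) *
        Real.sin (t / ε + Real.arcsin (x₀ / Real.sqrt (L ^ 2 + κ)))
    κ = x₀ ^ 2 - L ^ 2 ∧ x 0 = x₀ ∧
      ∀ t ∈ Set.Icc (0 : ℝ) (ε * Real.pi),
        HasDerivAt x ((1 / ε) * Real.sqrt (L ^ 2 + κ - x t ^ 2)) t :=
  flowing_layer_trajectory_solution_general ε L x₀ y₀ hε0 hx₀ hx₀neg hy₀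
end

section
/- The total period of a closed streamline in a circular cross-section, equal to the time in the bulk plus the time in the flowing layer, is T = −2 arcsin(x₁/√(x₁² + y₁²)) + επ, where (x₁, y₁) with x₁ < 0, y₁ = −ε√(L² − x₁²) is the entry point into the flowing layer; equivalently T = −2 arcsin(x₁/√((1 − ε²)x₁² + ε²L²)) + επ. In particular the time spent in the flowing layer equals επ for every streamline. -/
/-!
On the entry streamline `y₁ = -ε √(L² - x₁²)` one has `x₁² + y₁² = (1 - ε²) x₁² + ε² L²`,
which turns the first expression for the bulk time into the second. In the flowing layer
`√(L² + κ) = |x₁|`, so the transit time is `ε (arcsin 1 - arcsin (-1)) = ε π`, independent of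
the streamline.
-/

open Real

lemma sq_add_sq_neg_mul_sqrt_sub {x ε L : ℝ} (h : x ^ 2 ≤ L ^ 2) :
    x ^ 2 + (-(ε * √(L ^ 2 - x ^ 2))) ^ 2 = (1 - ε ^ 2) * x ^ 2 + ε ^ 2 * L ^ 2 := by
  rw [neg_sq, mul_pow, sq_sqrt (sub_nonneg.mpr h)]
  ring

lemma arcsin_neg_div_sqrt_sq_sub_arcsin_div_sqrt_sq {x : ℝ} (hx : x < 0) :
    arcsin (-x / √(x ^ 2)) - arcsin (x / √(x ^ 2)) = π := by
  have hsqrt : √(x ^ 2) = -x := by rw [← neg_sq, sqrt_sq (neg_nonneg.mpr hx.le)]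
  have hx0 : -x ≠ 0 := neg_ne_zero.mpr hx.ne
  rw [hsqrt, div_self hx0, div_neg, div_self hx.ne, arcsin_one, arcsin_neg_one]
  ring

theorem streamline_period_general (ε L x₁ y₁ : ℝ)
    (hx₁ : x₁ < 0) (hx₁L : |x₁| < L)
    (hy₁ : y₁ = -(ε * Real.sqrt (L ^ 2 - x₁ ^ 2))) :
    (-2 * Real.arcsin (x₁ / Real.sqrt (x₁ ^ 2 + y₁ ^ 2)) + ε * Real.pi =
      -2 * Real.arcsin (x₁ / Real.sqrt ((1 - ε ^ 2) * x₁ ^ 2 + ε ^ 2 * L ^ 2)) +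
        ε * Real.pi) ∧
    ε * (Real.arcsin (-x₁ / Real.sqrt (L ^ 2 + (x₁ ^ 2 - L ^ 2))) -
          Real.arcsin (x₁ / Real.sqrt (L ^ 2 + (x₁ ^ 2 - L ^ 2)))) =
      ε * Real.pi := by
  have hx₁L_sq : x₁ ^ 2 ≤ L ^ 2 := sq_le_sq' (abs_lt.mp hx₁L).1.le (abs_lt.mp hx₁L).2.le
  refine ⟨?_, ?_⟩
  · rw [hy₁, sq_add_sq_neg_mul_sqrt_sub hx₁L_sq]
  · rw [add_sub_cancel, arcsin_neg_div_sqrt_sq_sub_arcsin_div_sqrt_sq hx₁]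

/-- The period of a closed streamline is
T = −2 arcsin(x₁/√(x₁²+y₁²)) + επ = −2 arcsin(x₁/√((1−ε²)x₁²+ε²L²)) + επ,
where (x₁,y₁), x₁ < 0, y₁ = −ε√(L²−x₁²), is the entry point into the flowing
layer; and the time spent in the flowing layer equals επ for every
streamline. -/
theorem streamline_period (ε L x₁ y₁ : ℝ)
    (hε0 : 0 < ε) (hε1 : ε < 1) (hL : 0 < L)
    (hx₁ : x₁ < 0) (hx₁L : |x₁| < L)
    (hy₁ : y₁ = -(ε * Real.sqrt (L ^ 2 - x₁ ^ 2))) :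
    (-2 * Real.arcsin (x₁ / Real.sqrt (x₁ ^ 2 + y₁ ^ 2)) + ε * Real.pi =
      -2 * Real.arcsin (x₁ / Real.sqrt ((1 - ε ^ 2) * x₁ ^ 2 + ε ^ 2 * L ^ 2)) +
        ε * Real.pi) ∧
    ε * (Real.arcsin (-x₁ / Real.sqrt (L ^ 2 + (x₁ ^ 2 - L ^ 2))) -
          Real.arcsin (x₁ / Real.sqrt (L ^ 2 + (x₁ ^ 2 - L ^ 2)))) =
      ε * Real.pi :=
  streamline_period_general ε L x₁ y₁ hx₁ hx₁L hy₁
end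

section
/- If 0 < ε < 1 and 0 < c₁, c₃ < 1 with ε² < min(c₁, c₃), then (ε² − c₁)(1 − c₃) + (ε² − 1)(1 − c₁) < 0, and the condition y* < −ε√(1 − (R̄² − c₃)/(1 − c₃) − (R̄² − c₁)/(1 − c₁)) with y* = −√(c₁ − c₁(R̄² − c₁)/(1 − c₁) − (R̄² − c₃)/(1 − c₃)) is equivalent to R̄² < [(ε² − c₁)(1 − c₃) + (ε² − 1)(1 − c₁)c₃]/[(ε² − c₁)(1 − c₃) + (ε² − 1)(1 − c₁)], given R̄² > max(c₁, c₃). -/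
/-! Since `ε√B ≥ 0`, the inequality `-√A < -(ε√B)` is equivalent to `ε²B < A`.
After clearing the positive denominator `(1 - c₁)(1 - c₃)`, `A - ε²B` is affine in `R²` with slope `(ε² - c₁)(1 - c₃) + (ε² - 1)(1 - c₁)`, which is negative; dividing by it flips the
inequality into the stated bound on `R²`. -/

theorem neg_sqrt_lt_neg_mul_sqrt_iff {a b ε : ℝ} (hε : 0 ≤ ε) (hb : 0 ≤ b) :
    -√a < -(ε * √b) ↔ ε ^ 2 * b < a := by
  rw [neg_lt_neg_iff, Real.lt_sqrt (by positivity), mul_pow, Real.sq_sqrt hb]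

theorem sub_mul_add_sub_mul_neg {e c₁ c₃ : ℝ} (he : e < c₁) (hc₁ : c₁ < 1) (hc₃ : c₃ < 1) :
    (e - c₁) * (1 - c₃) + (e - 1) * (1 - c₁) < 0 := by
  have h₁ : (e - c₁) * (1 - c₃) < 0 := mul_neg_of_neg_of_pos (by linarith) (by linarith)
  have h₂ : (e - 1) * (1 - c₁) < 0 := mul_neg_of_neg_of_pos (by linarith) (by linarith)
  linarith

theorem shell_sub_mul_eq {e c₁ c₃ r : ℝ} (hc₁ : c₁ ≠ 1) (hc₃ : c₃ ≠ 1) :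
    (c₁ - c₁ * (r - c₁) / (1 - c₁) - (r - c₃) / (1 - c₃)) -
        e * (1 - (r - c₃) / (1 - c₃) - (r - c₁) / (1 - c₁)) =
      (r * ((e - c₁) * (1 - c₃) + (e - 1) * (1 - c₁)) -
          ((e - c₁) * (1 - c₃) + (e - 1) * (1 - c₁) * c₃)) / ((1 - c₁) * (1 - c₃)) := by
  have h₁ : 1 - c₁ ≠ 0 := sub_ne_zero.mpr hc₁.symm
  have h₃ : 1 - c₃ ≠ 0 := sub_ne_zero.mpr hc₃.symm
  field_simp
  ring

theorem shell_mul_lt_iff {e c₁ c₃ r : ℝ} (he : e < c₁) (hc₁ : c₁ < 1) (hc₃ : c₃ < 1) :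
    e * (1 - (r - c₃) / (1 - c₃) - (r - c₁) / (1 - c₁)) <
        c₁ - c₁ * (r - c₁) / (1 - c₁) - (r - c₃) / (1 - c₃) ↔
      r < ((e - c₁) * (1 - c₃) + (e - 1) * (1 - c₁) * c₃) /
        ((e - c₁) * (1 - c₃) + (e - 1) * (1 - c₁)) := by
  have hP : 0 < (1 - c₁) * (1 - c₃) := mul_pos (by linarith) (by linarith)
  rw [← sub_pos, shell_sub_mul_eq hc₁.ne hc₃.ne, div_pos_iff_of_pos_right hP, sub_pos,
    lt_div_iff_of_neg (sub_mul_add_sub_mul_neg he hc₁ hc₃)]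

theorem existence_condition_unequal_angles_general (ε c₁ c₃ R : ℝ)
    (hε0 : 0 < ε)
    (hc₁1 : c₁ < 1) (hc₃1 : c₃ < 1)
    (hεc : ε ^ 2 < min c₁ c₃)
    (hB : 0 ≤ 1 - (R ^ 2 - c₃) / (1 - c₃) - (R ^ 2 - c₁) / (1 - c₁)) :
    ((ε ^ 2 - c₁) * (1 - c₃) + (ε ^ 2 - 1) * (1 - c₁) < 0) ∧
    (max c₁ c₃ < R ^ 2 →
      ((-Real.sqrt (c₁ - c₁ * (R ^ 2 - c₁) / (1 - c₁) -
            (R ^ 2 - c₃) / (1 - c₃)) <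
          -(ε * Real.sqrt (1 - (R ^ 2 - c₃) / (1 - c₃) -
              (R ^ 2 - c₁) / (1 - c₁)))) ↔
        R ^ 2 < ((ε ^ 2 - c₁) * (1 - c₃) + (ε ^ 2 - 1) * (1 - c₁) * c₃) /
            ((ε ^ 2 - c₁) * (1 - c₃) + (ε ^ 2 - 1) * (1 - c₁)))) := by
  have hεc₁ : ε ^ 2 < c₁ := hεc.trans_le (min_le_left _ _)
  refine ⟨sub_mul_add_sub_mul_neg hεc₁ hc₁1 hc₃1, fun _ => ?_⟩
  rw [neg_sqrt_lt_neg_mul_sqrt_iff hε0.le hB, shell_mul_lt_iff hεc₁ hc₁1 hc₃1]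

/-- If 0 < ε < 1 and 0 < c₁, c₃ < 1 with ε² < min(c₁,c₃), then
(ε²−c₁)(1−c₃) + (ε²−1)(1−c₁) < 0, and for R̄² > max(c₁,c₃) the condition
y* < −ε√(1 − (R̄²−c₃)/(1−c₃) − (R̄²−c₁)/(1−c₁)), with
y* = −√(c₁ − c₁(R̄²−c₁)/(1−c₁) − (R̄²−c₃)/(1−c₃)), is equivalent to
R̄² < [(ε²−c₁)(1−c₃) + (ε²−1)(1−c₁)c₃]/[(ε²−c₁)(1−c₃) + (ε²−1)(1−c₁)]. -/
theorem existence_condition_unequal_angles (ε c₁ c₃ R : ℝ)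
    (hε0 : 0 < ε) (hε1 : ε < 1)
    (hc₁0 : 0 < c₁) (hc₁1 : c₁ < 1) (hc₃0 : 0 < c₃) (hc₃1 : c₃ < 1)
    (hεc : ε ^ 2 < min c₁ c₃)
    (hA : 0 ≤ c₁ - c₁ * (R ^ 2 - c₁) / (1 - c₁) - (R ^ 2 - c₃) / (1 - c₃))
    (hB : 0 ≤ 1 - (R ^ 2 - c₃) / (1 - c₃) - (R ^ 2 - c₁) / (1 - c₁)) :
    ((ε ^ 2 - c₁) * (1 - c₃) + (ε ^ 2 - 1) * (1 - c₁) < 0) ∧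
    (max c₁ c₃ < R ^ 2 →
      ((-Real.sqrt (c₁ - c₁ * (R ^ 2 - c₁) / (1 - c₁) -
            (R ^ 2 - c₃) / (1 - c₃)) <
          -(ε * Real.sqrt (1 - (R ^ 2 - c₃) / (1 - c₃) -
              (R ^ 2 - c₁) / (1 - c₁)))) ↔
        R ^ 2 < ((ε ^ 2 - c₁) * (1 - c₃) + (ε ^ 2 - 1) * (1 - c₁) * c₃) /
            ((ε ^ 2 - c₁) * (1 - c₃) + (ε ^ 2 - 1) * (1 - c₁)))) :=
  existence_condition_unequal_angles_general ε c₁ c₃ R hε0 hc₁1 hc₃1 hεc hB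
end
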